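/- Let 𝓛 and 𝓐_un be linear endomorphisms of the space of d×d complex matrices such that: (a) 𝓐_un maps positive semidefinite matrices to positive semidefinite matrices; (b) for every s ≥ 0, exp(s·𝓛) maps density matrices to density matrices; (c) for every s ≥ 0 and every Hermitian d×d matrix F, ‖exp(s·𝓛)(F)‖₁ ≤ ‖F‖₁. Let T > 0, let N be a positive integer, let c > 0 and M ∈ ℕ, and set Δt := T/N. Assume ‖exp(Δt·𝓛)(ρ) − 𝓐_un(ρ)‖₁ ≤ c·Δt^{M+1} for every density matrix ρ, and N ≥ T·(2c)^{1/(M+1)}. Define the normalized (nonlinear) map 𝓐(ρ) := 𝓐_un(ρ)/Tr(𝓐_un(ρ)). Then for every density matrix ρ_0, ‖exp(T·𝓛)(ρ_0) − 𝓐^{∘N}(ρ_0)‖₁ ≤ 4c·T^{M+1}/N^M. -/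

import Mathlib

open MeasureTheory Filter
open scoped Matrix ComplexOrder

attribute [local instance] Matrix.normedAddCommGroup Matrix.normedSpace

/-- Trace norm (Schatten-1 norm) of a complex matrix: `‖A‖₁ = Tr √(Aᴴ A)`. -/
noncomputable def traceNorm {d : ℕ} (A : Matrix (Fin d) (Fin d) ℂ) : ℝ :=
  ((Matrix.posSemidef_conjTranspose_mul_self A).1.eigenvectorUnitary.1 *
      Matrix.diagonal (((↑) : ℝ → ℂ) ∘ (√·) ∘ (Matrix.posSemidef_conjTranspose_mul_self A).1.eigenvalues) *
      (star (Matrix.posSemidef_conjTranspose_mul_self A).1.eigenvectorUnitary :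
        Matrix (Fin d) (Fin d) ℂ)).trace.re

/-- The ring topology on operators on matrices (found automatically by the older library). -/
instance instIsTopologicalRingMatrixCLM {d : ℕ} :
    IsTopologicalRing (Matrix (Fin d) (Fin d) ℂ →L[ℂ] Matrix (Fin d) (Fin d) ℂ) :=
  @NonUnitalSeminormedRing.toIsTopologicalRing _
    (ContinuousLinearMap.toNormedRing (𝕜 := ℂ)
      (E := Matrix (Fin d) (Fin d) ℂ)).toNonUnitalNormedRing.toNonUnitalSeminormedRing

/-!
Write `Φ = exp(Δt 𝓛)`, so that `exp(T 𝓛) = Φ^N`. On density matrices the unnormalized step is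
`ε = c Δt^{M+1}`-close to `Φ`; as `Φ ρ` has trace one, `|Tr 𝓐_un ρ - 1| ≤ ε` as well, and this is
exactly what dividing by the trace costs, so the normalized step is `2ε`-close to `Φ`. The condition
on `N` gives `2ε ≤ 1`, which keeps the trace positive. Because `Φ` preserves density matrices and
contracts the trace norm of Hermitian matrices, telescoping `Φ^N ρ - 𝓐^N ρ` over the steps adds the
one-step errors: `N · 2ε = 2 c T^{M+1} / N^M`.

The triangle inequality for `‖·‖₁` on Hermitian matrices comes from `‖A‖₁ = Tr A⁺ + Tr A⁻`, which
bounds the diagonal of `A` in every orthonormal basis; in an eigenbasis of `A + B` that diagonal is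
the spectrum.
-/

open scoped MatrixOrder

namespace Matrix

variable {n : Type*} [Fintype n] [DecidableEq n]

theorem trace_conjStarAlgAut (V : unitaryGroup n ℂ) (X : Matrix n n ℂ) :
    (Unitary.conjStarAlgAut ℂ _ V X).trace = X.trace := by
  rw [Unitary.conjStarAlgAut_apply, trace_mul_cycle, Unitary.coe_star_mul_self, one_mul]

theorem IsHermitian.trace_cfc {A : Matrix n n ℂ} (hA : A.IsHermitian) (f : ℝ → ℝ) :
    (cfc f A).trace = ∑ i, (f (hA.eigenvalues i) : ℂ) := by
  rw [hA.cfc_eq, IsHermitian.cfc, trace_conjStarAlgAut, trace_diagonal]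
  rfl

end Matrix

theorem Complex.norm_eq_re_of_nonneg {z : ℂ} (hz : 0 ≤ z) : ‖z‖ = z.re := by
  simpa using congrArg Complex.re (Complex.norm_of_nonneg' hz)

section TraceNorm

variable {d : ℕ}

theorem traceNorm_eq_re_trace_abs (A : Matrix (Fin d) (Fin d) ℂ) :
    traceNorm A = (CFC.abs A).trace.re := by
  have h := Matrix.posSemidef_conjTranspose_mul_self A
  rw [CFC.abs, CFC.sqrt_eq_cfc, cfc_nnreal_eq_real _ (star A * A), Matrix.star_eq_conjTranspose,
    h.1.cfc_eq]
  unfold traceNorm Matrix.IsHermitian.cfc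
  rw [Unitary.conjStarAlgAut_apply]
  congr 5
  ext i
  simp [max_eq_left (h.eigenvalues_nonneg i)]

theorem Matrix.IsHermitian.traceNorm_eq_sum_abs_eigenvalues {A : Matrix (Fin d) (Fin d) ℂ}
    (hA : A.IsHermitian) : traceNorm A = ∑ i, |hA.eigenvalues i| := by
  rw [traceNorm_eq_re_trace_abs, CFC.abs_eq_cfc_norm A hA.isSelfAdjoint, hA.trace_cfc]
  simp

theorem Matrix.PosSemidef.traceNorm_eq {A : Matrix (Fin d) (Fin d) ℂ} (hA : A.PosSemidef) :
    traceNorm A = A.trace.re := by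
  rw [traceNorm_eq_re_trace_abs, CFC.abs_of_nonneg A hA.nonneg]

theorem traceNorm_smul (r : ℂ) (A : Matrix (Fin d) (Fin d) ℂ) :
    traceNorm (r • A) = ‖r‖ * traceNorm A := by
  rw [traceNorm_eq_re_trace_abs, traceNorm_eq_re_trace_abs, CFC.abs_smul, Matrix.trace_smul]
  simp

theorem Matrix.IsHermitian.sum_norm_diag_conj_le_traceNorm {A : Matrix (Fin d) (Fin d) ℂ}
    (hA : A.IsHermitian) (V : Matrix.unitaryGroup (Fin d) ℂ) :
    ∑ i, ‖Unitary.conjStarAlgAut ℂ _ V A i i‖ ≤ traceNorm A := by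
  set W := Unitary.conjStarAlgAut ℂ (Matrix (Fin d) (Fin d) ℂ) V
  have hW : ∀ X : Matrix (Fin d) (Fin d) ℂ, 0 ≤ X → (W X).PosSemidef := fun X hX => by
    simpa [W, Unitary.conjStarAlgAut_apply, Matrix.star_eq_conjTranspose] using
      (Matrix.nonneg_iff_posSemidef.mp hX).mul_mul_conjTranspose_same (V : Matrix (Fin d) (Fin d) ℂ)
  have hP := hW _ (CFC.posPart_nonneg A)
  have hQ := hW _ (CFC.negPart_nonneg A)
  have hWA : W A = W A⁺ - W A⁻ := by rw [← map_sub, CFC.posPart_sub_negPart A hA.isSelfAdjoint]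
  calc ∑ i, ‖W A i i‖ = ∑ i, ‖W A⁺ i i - W A⁻ i i‖ := by simp only [hWA, Matrix.sub_apply]
    _ ≤ ∑ i, ((W A⁺ i i).re + (W A⁻ i i).re) := Finset.sum_le_sum fun i _ => by
        rw [← Complex.norm_eq_re_of_nonneg hP.diag_nonneg,
          ← Complex.norm_eq_re_of_nonneg hQ.diag_nonneg]
        exact norm_sub_le _ _
    _ = traceNorm A := by
        rw [traceNorm_eq_re_trace_abs, ← CFC.posPart_add_negPart A hA.isSelfAdjoint,
          ← Matrix.trace_conjStarAlgAut V, map_add, Matrix.trace_add, Complex.add_re,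
          Matrix.trace, Matrix.trace, Complex.re_sum, Complex.re_sum, ← Finset.sum_add_distrib]
        rfl

theorem Matrix.IsHermitian.norm_trace_le_traceNorm {A : Matrix (Fin d) (Fin d) ℂ}
    (hA : A.IsHermitian) : ‖A.trace‖ ≤ traceNorm A := by
  simpa [Matrix.trace] using (norm_sum_le _ _).trans (hA.sum_norm_diag_conj_le_traceNorm 1)

theorem Matrix.IsHermitian.traceNorm_add_le {A B : Matrix (Fin d) (Fin d) ℂ}
    (hA : A.IsHermitian) (hB : B.IsHermitian) :
    traceNorm (A + B) ≤ traceNorm A + traceNorm B := by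
  have hAB := hA.add hB
  set V := star hAB.eigenvectorUnitary
  calc traceNorm (A + B) = ∑ i, ‖Unitary.conjStarAlgAut ℂ _ V (A + B) i i‖ := by
        simp [V, hAB.traceNorm_eq_sum_abs_eigenvalues, hAB.conjStarAlgAut_star_eigenvectorUnitary]
    _ ≤ ∑ i, (‖Unitary.conjStarAlgAut ℂ _ V A i i‖ + ‖Unitary.conjStarAlgAut ℂ _ V B i i‖) :=
        Finset.sum_le_sum fun i _ => by
          rw [map_add, Matrix.add_apply]; exact norm_add_le _ _
    _ ≤ traceNorm A + traceNorm B := by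
        rw [Finset.sum_add_distrib]
        exact add_le_add (hA.sum_norm_diag_conj_le_traceNorm V) (hB.sum_norm_diag_conj_le_traceNorm V)

end TraceNorm

def IsDensityMatrix {n : Type*} [Fintype n] (ρ : Matrix n n ℂ) : Prop :=
  ρ.PosSemidef ∧ ρ.trace = 1

section Normalization

variable {d : ℕ}

theorem IsDensityMatrix.traceNorm_sub_normalize_le {ρ σ : Matrix (Fin d) (Fin d) ℂ}
    (hρ : IsDensityMatrix ρ) (hσ : σ.PosSemidef) (hclose : traceNorm (ρ - σ) < 1) :
    IsDensityMatrix (σ.trace⁻¹ • σ) ∧ traceNorm (ρ - σ.trace⁻¹ • σ) ≤ 2 * traceNorm (ρ - σ) := by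
  set τ := ‖σ.trace‖
  have hτ : σ.trace = τ := Complex.eq_coe_norm_of_nonneg hσ.trace_nonneg
  have hdev : |1 - τ| ≤ traceNorm (ρ - σ) := by
    simpa [Matrix.trace_sub, hρ.2, hτ, ← Complex.ofReal_one, ← Complex.ofReal_sub] using
      (hρ.1.1.sub hσ.1).norm_trace_le_traceNorm
  have hτpos : 0 < τ := by linarith [abs_lt.mp (hdev.trans_lt hclose)]
  have hnormalized : IsDensityMatrix (σ.trace⁻¹ • σ) := by
    refine ⟨hσ.smul ?_, ?_⟩
    · rw [hτ, ← Complex.ofReal_inv]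
      exact Complex.zero_le_real.mpr (inv_nonneg.mpr hτpos.le)
    · rw [Matrix.trace_smul, smul_eq_mul, hτ, inv_mul_cancel₀ (by exact_mod_cast hτpos.ne')]
  refine ⟨hnormalized, ?_⟩
  have hrescale : traceNorm (σ - σ.trace⁻¹ • σ) ≤ traceNorm (ρ - σ) := by
    nth_rw 1 [← one_smul ℂ σ]
    rw [← sub_smul, traceNorm_smul, hσ.traceNorm_eq, hτ, Complex.ofReal_re,
      ← Complex.ofReal_inv, ← Complex.ofReal_one, ← Complex.ofReal_sub, Complex.norm_real,
      Real.norm_eq_abs]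
    calc |1 - τ⁻¹| * τ = |(1 - τ⁻¹) * τ| := by rw [abs_mul, abs_of_pos hτpos]
      _ = |1 - τ| := by rw [sub_mul, one_mul, inv_mul_cancel₀ hτpos.ne', abs_sub_comm]
      _ ≤ traceNorm (ρ - σ) := hdev
  calc traceNorm (ρ - σ.trace⁻¹ • σ) = traceNorm ((ρ - σ) + (σ - σ.trace⁻¹ • σ)) := by
        rw [sub_add_sub_cancel]
    _ ≤ traceNorm (ρ - σ) + traceNorm (σ - σ.trace⁻¹ • σ) :=
        (hρ.1.1.sub hσ.1).traceNorm_add_le (hσ.1.sub hnormalized.1.1)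
    _ ≤ 2 * traceNorm (ρ - σ) := by linarith

end Normalization

section Iteration

variable {d : ℕ} {F : Type*} [FunLike F (Matrix (Fin d) (Fin d) ℂ) (Matrix (Fin d) (Fin d) ℂ)]
  [AddMonoidHomClass F (Matrix (Fin d) (Fin d) ℂ) (Matrix (Fin d) (Fin d) ℂ)] {Φ : F}

theorem traceNorm_iterate_sub_iterate_le
    {𝓐 : Matrix (Fin d) (Fin d) ℂ → Matrix (Fin d) (Fin d) ℂ} {δ : ℝ}
    (hΦ : ∀ ρ, IsDensityMatrix ρ → IsDensityMatrix (Φ ρ))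
    (hΦ_contract : ∀ X, X.IsHermitian → traceNorm (Φ X) ≤ traceNorm X)
    (h𝓐 : ∀ ρ, IsDensityMatrix ρ → IsDensityMatrix (𝓐 ρ))
    (hstep : ∀ ρ, IsDensityMatrix ρ → traceNorm (Φ ρ - 𝓐 ρ) ≤ δ)
    (k : ℕ) {ρ : Matrix (Fin d) (Fin d) ℂ} (hρ : IsDensityMatrix ρ) :
    traceNorm (Φ^[k] ρ - 𝓐^[k] ρ) ≤ k * δ := by
  induction k with
  | zero => simp [Matrix.PosSemidef.zero.traceNorm_eq]
  | succ k ih =>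
    have hΦk : IsDensityMatrix (Φ^[k] ρ) := Set.MapsTo.iterate (f := ⇑Φ) hΦ k hρ
    have h𝓐k : IsDensityMatrix (𝓐^[k] ρ) := Set.MapsTo.iterate (f := 𝓐) h𝓐 k hρ
    rw [Function.iterate_succ_apply', Function.iterate_succ_apply']
    calc traceNorm (Φ (Φ^[k] ρ) - 𝓐 (𝓐^[k] ρ))
        = traceNorm (Φ (Φ^[k] ρ - 𝓐^[k] ρ) + (Φ (𝓐^[k] ρ) - 𝓐 (𝓐^[k] ρ))) := by
          rw [map_sub, sub_add_sub_cancel]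
      _ ≤ traceNorm (Φ (Φ^[k] ρ - 𝓐^[k] ρ)) + traceNorm (Φ (𝓐^[k] ρ) - 𝓐 (𝓐^[k] ρ)) := by
          refine Matrix.IsHermitian.traceNorm_add_le ?_ ((hΦ _ h𝓐k).1.1.sub (h𝓐 _ h𝓐k).1.1)
          rw [map_sub]
          exact (hΦ _ hΦk).1.1.sub (hΦ _ h𝓐k).1.1
      _ ≤ k * δ + δ := add_le_add ((hΦ_contract _ (hΦk.1.1.sub h𝓐k.1.1)).trans ih) (hstep _ h𝓐k)
      _ = (k + 1 : ℕ) * δ := by push_cast; ring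

theorem traceNorm_iterate_sub_iterate_normalize_le
    {𝓐un : Matrix (Fin d) (Fin d) ℂ → Matrix (Fin d) (Fin d) ℂ} {ε : ℝ}
    (hΦ : ∀ ρ, IsDensityMatrix ρ → IsDensityMatrix (Φ ρ))
    (hΦ_contract : ∀ X, X.IsHermitian → traceNorm (Φ X) ≤ traceNorm X)
    (h𝓐un : ∀ ρ : Matrix (Fin d) (Fin d) ℂ, ρ.PosSemidef → (𝓐un ρ).PosSemidef)
    (hε : ε < 1) (herr : ∀ ρ, IsDensityMatrix ρ → traceNorm (Φ ρ - 𝓐un ρ) ≤ ε)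
    (k : ℕ) {ρ : Matrix (Fin d) (Fin d) ℂ} (hρ : IsDensityMatrix ρ) :
    traceNorm (Φ^[k] ρ - (fun ρ => (𝓐un ρ).trace⁻¹ • 𝓐un ρ)^[k] ρ) ≤ k * (2 * ε) := by
  have hnormalize (ρ) (hρ : IsDensityMatrix ρ) :=
    (hΦ ρ hρ).traceNorm_sub_normalize_le (h𝓐un ρ hρ.1) ((herr ρ hρ).trans_lt hε)
  refine traceNorm_iterate_sub_iterate_le hΦ hΦ_contract (fun ρ hρ => (hnormalize ρ hρ).1)
    (fun ρ hρ => ?_) k hρ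
  linarith [(hnormalize ρ hρ).2, herr ρ hρ]

end Iteration

theorem ContinuousLinearMap.exp_nsmul {E : Type*} [NormedAddCommGroup E] [NormedSpace ℂ E]
    [CompleteSpace E] (n : ℕ) (L : E →L[ℂ] E) :
    NormedSpace.exp (n • L) = NormedSpace.exp L ^ n :=
  letI : NormedAlgebra ℚ (E →L[ℂ] E) := NormedAlgebra.restrictScalars ℚ ℂ _
  NormedSpace.exp_nsmul n L

theorem pow_succ_mul_le_one_of_mul_rpow_le_one {x a : ℝ} (hx : 0 ≤ x) (ha : 0 ≤ a) {m : ℕ}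
    (h : x * a ^ ((1 : ℝ) / ((m : ℝ) + 1)) ≤ 1) : x ^ (m + 1) * a ≤ 1 := by
  have hroot : (a ^ ((1 : ℝ) / ((m : ℝ) + 1))) ^ (m + 1) = a := by
    rw [one_div, ← Nat.cast_succ, Real.rpow_inv_natCast_pow ha m.succ_ne_zero]
  have := pow_le_one₀ (n := m + 1) (by positivity) h
  rwa [mul_pow, hroot] at this

theorem normalized_scheme_finite_time_error_general {d : ℕ}
    (𝓛 : Matrix (Fin d) (Fin d) ℂ →L[ℂ] Matrix (Fin d) (Fin d) ℂ)
    (𝓐un : Matrix (Fin d) (Fin d) ℂ →ₗ[ℂ] Matrix (Fin d) (Fin d) ℂ)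
    (ha : ∀ ρ : Matrix (Fin d) (Fin d) ℂ, ρ.PosSemidef → (𝓐un ρ).PosSemidef)
    (hb : ∀ s : ℝ, 0 ≤ s → ∀ ρ : Matrix (Fin d) (Fin d) ℂ, ρ.PosSemidef → ρ.trace = 1 →
      ((NormedSpace.exp ((s : ℂ) • 𝓛)) ρ).PosSemidef
        ∧ ((NormedSpace.exp ((s : ℂ) • 𝓛)) ρ).trace = 1)
    (hc : ∀ s : ℝ, 0 ≤ s → ∀ F : Matrix (Fin d) (Fin d) ℂ, F.IsHermitian →
      traceNorm ((NormedSpace.exp ((s : ℂ) • 𝓛)) F) ≤ traceNorm F)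
    (T : ℝ) (hT : 0 < T) (N : ℕ) (hN : 0 < N) (c : ℝ) (hcpos : 0 < c) (M : ℕ)
    (Δt : ℝ) (hΔt : Δt = T / N)
    (herr : ∀ ρ : Matrix (Fin d) (Fin d) ℂ, ρ.PosSemidef → ρ.trace = 1 →
      traceNorm ((NormedSpace.exp ((Δt : ℂ) • 𝓛)) ρ - 𝓐un ρ) ≤ c * Δt ^ (M + 1))
    (hNbig : (N : ℝ) ≥ T * (2 * c) ^ ((1 : ℝ) / ((M : ℝ) + 1)))
    (𝓐 : Matrix (Fin d) (Fin d) ℂ → Matrix (Fin d) (Fin d) ℂ)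
    (h𝓐 : 𝓐 = fun ρ => ((𝓐un ρ).trace)⁻¹ • 𝓐un ρ) :
    ∀ ρ0 : Matrix (Fin d) (Fin d) ℂ, ρ0.PosSemidef → ρ0.trace = 1 →
      traceNorm ((NormedSpace.exp ((T : ℂ) • 𝓛)) ρ0 - 𝓐^[N] ρ0)
        ≤ 4 * c * T ^ (M + 1) / (N : ℝ) ^ M := by
  intro ρ0 hρ0 hρ0tr
  subst h𝓐
  have hNpos : (0 : ℝ) < N := Nat.cast_pos.mpr hN
  have hΔt_nonneg : 0 ≤ Δt := hΔt ▸ by positivity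
  have hsmall : c * Δt ^ (M + 1) < 1 := by
    have := pow_succ_mul_le_one_of_mul_rpow_le_one hΔt_nonneg (by positivity : 0 ≤ 2 * c) (m := M)
      (by rwa [hΔt, div_mul_eq_mul_div, div_le_one hNpos])
    nlinarith [pow_nonneg hΔt_nonneg (M + 1)]
  have hexp : NormedSpace.exp ((T : ℂ) • 𝓛) = NormedSpace.exp ((Δt : ℂ) • 𝓛) ^ N := by
    have hTL : (T : ℂ) • 𝓛 = N • ((Δt : ℂ) • 𝓛) := by
      rw [← Nat.cast_smul_eq_nsmul ℂ, smul_smul, hΔt, Complex.ofReal_div, Complex.ofReal_natCast,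
        mul_div_cancel₀ _ (by exact_mod_cast hN.ne')]
    rw [hTL]
    exact ContinuousLinearMap.exp_nsmul N _
  rw [hexp, FunLike.coe_pow_eq_iterate]
  calc _ ≤ N * (2 * (c * Δt ^ (M + 1))) :=
        traceNorm_iterate_sub_iterate_normalize_le
          (fun ρ hρ => hb Δt hΔt_nonneg ρ hρ.1 hρ.2) (hc Δt hΔt_nonneg) ha hsmall
          (fun ρ hρ => herr ρ hρ.1 hρ.2) N ⟨hρ0, hρ0tr⟩
    _ = 2 * c * T ^ (M + 1) / (N : ℝ) ^ M := by
        rw [hΔt, div_pow, pow_succ _ M, pow_succ (N : ℝ) M]; field_simp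
    _ ≤ 4 * c * T ^ (M + 1) / (N : ℝ) ^ M := by gcongr; linarith

/-- Finite-time normalization error (Lemma 6, second part, of the paper): iterating the
normalized scheme `𝓐(ρ) = 𝓐_un(ρ)/Tr(𝓐_un(ρ))` for `N` steps of size `Δt = T/N`
accumulates trace-norm error at most `4 c T^{M+1} / N^M`, provided
`N ≥ T (2c)^{1/(M+1)}`. -/
theorem normalized_scheme_finite_time_error {d : ℕ} (hd : 1 ≤ d)
    (𝓛 : Matrix (Fin d) (Fin d) ℂ →L[ℂ] Matrix (Fin d) (Fin d) ℂ)
    (𝓐un : Matrix (Fin d) (Fin d) ℂ →ₗ[ℂ] Matrix (Fin d) (Fin d) ℂ)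
    (ha : ∀ ρ : Matrix (Fin d) (Fin d) ℂ, ρ.PosSemidef → (𝓐un ρ).PosSemidef)
    (hb : ∀ s : ℝ, 0 ≤ s → ∀ ρ : Matrix (Fin d) (Fin d) ℂ, ρ.PosSemidef → ρ.trace = 1 →
      ((NormedSpace.exp ((s : ℂ) • 𝓛)) ρ).PosSemidef
        ∧ ((NormedSpace.exp ((s : ℂ) • 𝓛)) ρ).trace = 1)
    (hc : ∀ s : ℝ, 0 ≤ s → ∀ F : Matrix (Fin d) (Fin d) ℂ, F.IsHermitian →
      traceNorm ((NormedSpace.exp ((s : ℂ) • 𝓛)) F) ≤ traceNorm F)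
    (T : ℝ) (hT : 0 < T) (N : ℕ) (hN : 0 < N) (c : ℝ) (hcpos : 0 < c) (M : ℕ)
    (Δt : ℝ) (hΔt : Δt = T / N)
    (herr : ∀ ρ : Matrix (Fin d) (Fin d) ℂ, ρ.PosSemidef → ρ.trace = 1 →
      traceNorm ((NormedSpace.exp ((Δt : ℂ) • 𝓛)) ρ - 𝓐un ρ) ≤ c * Δt ^ (M + 1))
    (hNbig : (N : ℝ) ≥ T * (2 * c) ^ ((1 : ℝ) / ((M : ℝ) + 1)))
    (𝓐 : Matrix (Fin d) (Fin d) ℂ → Matrix (Fin d) (Fin d) ℂ)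
    (h𝓐 : 𝓐 = fun ρ => ((𝓐un ρ).trace)⁻¹ • 𝓐un ρ) :
    ∀ ρ0 : Matrix (Fin d) (Fin d) ℂ, ρ0.PosSemidef → ρ0.trace = 1 →
      traceNorm ((NormedSpace.exp ((T : ℂ) • 𝓛)) ρ0 - 𝓐^[N] ρ0)
        ≤ 4 * c * T ^ (M + 1) / (N : ℝ) ^ M :=
  normalized_scheme_finite_time_error_general 𝓛 𝓐un ha hb hc T hT N hN c hcpos M Δt hΔt herr hNbig 𝓐
    h𝓐
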